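/- The function W : (ℂ∖{0})² → ℂ defined by W(y_1, y_2) = y_1 + y_2 + y_1^{−1}y_2^{−1} + 3·y_2^{−1} + y_1·y_2^{−1} has exactly 5 critical points, and each of these critical points is nondegenerate. -/

import Mathlib

/-- The potential function of the monotone fiber `L(2,2)` in `X̂₂` with bulk deformation `e^a + e^{-a} = 3` (energy factor dropped). -/
noncomputable def W : ℂ → ℂ → ℂ := fun y₁ y₂ =>
  y₁ + y₂ + y₁⁻¹ * y₂⁻¹ + 3 * y₂⁻¹ + y₁ * y₂⁻¹

/-- A point of `(ℂ∖{0})²` is a critical point of `W` if both partial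
derivatives of `W` vanish there. -/
def IsCritPt (p : ℂ × ℂ) : Prop :=
  p.1 ≠ 0 ∧ p.2 ≠ 0 ∧
    deriv (fun z => W z p.2) p.1 = 0 ∧ deriv (fun z => W p.1 z) p.2 = 0

/-- The Hessian determinant
`(∂²W/∂y₁²)(∂²W/∂y₂²) - (∂²W/∂y₁∂y₂)²` of `W` at a point. -/
noncomputable def hessDet (p : ℂ × ℂ) : ℂ :=
  deriv (deriv (fun z => W z p.2)) p.1 * deriv (deriv (fun z => W p.1 z)) p.2
    - (deriv (fun w => deriv (fun z => W z w) p.1) p.2) ^ 2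

/-!
Clearing denominators, the critical equations of `W` are `x²y = 1 - x²` and `xy² = 1 + 3x + x²`.
The first gives `y = (1 - x²)/x²`, and substituting into the second leaves the quintic
`x⁵ + 2x⁴ + x³ + 2x² - 1 = 0`, which is separable, so there are exactly five critical points.
At a critical point the same two equations collapse the Hessian determinant to
`(4 - x³)/(x³y²)`, and `x³ = 4` has no common root with the quintic.
-/

open Polynomial

theorem isCoprime_of_mul_add_mul_eq_unit {R : Type*} [CommSemiring R] {a b x y u : R}
    (hu : IsUnit u) (h : a * x + b * y = u) : IsCoprime x y := by
  obtain ⟨v, rfl⟩ := hu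
  refine ⟨↑v⁻¹ * a, ↑v⁻¹ * b, ?_⟩
  rw [mul_assoc, mul_assoc, ← mul_add, h, Units.inv_mul]

theorem ncard_setOf_eval_eq_zero {k : Type*} [Field k] [IsAlgClosed k] {p : k[X]}
    (hp : p.Separable) : {x : k | p.eval x = 0}.ncard = p.natDegree := by
  have hroots : {x : k | p.eval x = 0} = p.rootSet k := by
    ext x
    simp [mem_rootSet, hp.ne_zero]
  rw [hroots, Set.ncard_eq_toFinset_card', Set.toFinset_card,
    card_rootSet_eq_natDegree hp (IsAlgClosed.splits _)]

noncomputable def quintic : ℂ[X] := X ^ 5 + 2 * X ^ 4 + X ^ 3 + 2 * X ^ 2 - 1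

theorem eval_quintic (x : ℂ) : quintic.eval x = x ^ 5 + 2 * x ^ 4 + x ^ 3 + 2 * x ^ 2 - 1 := by
  simp [quintic]

theorem natDegree_quintic : quintic.natDegree = 5 := by
  unfold quintic
  compute_degree!

theorem derivative_quintic :
    derivative quintic = 5 * X ^ 4 + 8 * X ^ 3 + 3 * X ^ 2 + 4 * X := by
  simp only [quintic, derivative_sub, derivative_add, derivative_mul, derivative_X_pow,
    derivative_ofNat, derivative_one]
  simp only [map_ofNat C, Nat.cast_ofNat]
  ring

theorem separable_quintic : quintic.Separable := by
  refine isCoprime_of_mul_add_mul_eq_unit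
    (a := -19015 - 5528 * X - 13364 * X ^ 2 - 13390 * X ^ 3)
    (b := -1382 + 7203 * X + 1532 * X ^ 2 + 3744 * X ^ 3 + 2678 * X ^ 4) (u := 19015) ?_ ?_
  · rw [← map_ofNat C]
    exact isUnit_C.mpr (isUnit_iff_ne_zero.mpr (by norm_num))
  · rw [derivative_quintic, quintic]
    ring

section Roots

variable {x : ℂ}

theorem ne_zero_of_eval_quintic_eq_zero (hQ : quintic.eval x = 0) : x ≠ 0 := by
  rintro rfl
  norm_num [eval_quintic] at hQ

-- Modulo `x² - 1` the quintic reduces to `2x + 3`.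
theorem one_sub_sq_ne_zero_of_eval_quintic_eq_zero (hQ : quintic.eval x = 0) :
    1 - x ^ 2 ≠ 0 := by
  intro h
  rw [eval_quintic] at hQ
  have : (5 : ℂ) = 0 := by
    linear_combination
      (-4 - (2 * x - 3) * (x ^ 3 + 2 * x ^ 2 + 2 * x + 4)) * h - (2 * x - 3) * hQ
  norm_num at this

-- Modulo `x³ - 4` the quintic reduces to `6x² + 8x + 3`; their resultant is `3803`.
theorem four_sub_cube_ne_zero_of_eval_quintic_eq_zero (hQ : quintic.eval x = 0) :
    4 - x ^ 3 ≠ 0 := by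
  intro h
  rw [eval_quintic] at hQ
  have : (3803 : ℂ) = 0 := by
    linear_combination (-183 + 120 * x + 46 * x ^ 2) * hQ
      - (-905 - 30 * x - 103 * x ^ 2 - 212 * x ^ 3 - 46 * x ^ 4) * h
  norm_num at this

end Roots

section Derivatives

variable {x y : ℂ}

theorem deriv_W_fst (hx : x ≠ 0) :
    deriv (fun z => W z y) x = 1 - (x ^ 2)⁻¹ * y⁻¹ + y⁻¹ := by
  have h : HasDerivAt (fun z => z + y + z⁻¹ * y⁻¹ + 3 * y⁻¹ + z * y⁻¹)
      (1 + -(x ^ 2)⁻¹ * y⁻¹ + 1 * y⁻¹) x :=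
    ((((hasDerivAt_id x).add_const y).add ((hasDerivAt_inv hx).mul_const y⁻¹)).add_const
      (3 * y⁻¹)).add ((hasDerivAt_id x).mul_const y⁻¹)
  exact (h.congr_deriv (by ring)).deriv

theorem deriv_W_snd (hy : y ≠ 0) :
    deriv (fun z => W x z) y = 1 - (x⁻¹ + 3 + x) * (y ^ 2)⁻¹ := by
  have h : HasDerivAt (fun z => x + z + x⁻¹ * z⁻¹ + 3 * z⁻¹ + x * z⁻¹)
      (1 + x⁻¹ * -(y ^ 2)⁻¹ + 3 * -(y ^ 2)⁻¹ + x * -(y ^ 2)⁻¹) y :=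
    ((((hasDerivAt_id y).const_add x).add ((hasDerivAt_inv hy).const_mul x⁻¹)).add
      ((hasDerivAt_inv hy).const_mul 3)).add ((hasDerivAt_inv hy).const_mul x)
  exact (h.congr_deriv (by ring)).deriv

theorem hasDerivAt_inv_sq (hx : x ≠ 0) :
    HasDerivAt (fun z : ℂ => (z ^ 2)⁻¹) (-2 * (x ^ 3)⁻¹) x :=
  ((hasDerivAt_pow 2 x).inv (pow_ne_zero 2 hx)).congr_deriv (by field_simp; ring)

theorem deriv_deriv_W_fst (hx : x ≠ 0) :
    deriv (deriv (fun z => W z y)) x = 2 * y⁻¹ * (x ^ 3)⁻¹ := by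
  have hW : deriv (fun z => W z y) =ᶠ[nhds x] fun z => 1 - (z ^ 2)⁻¹ * y⁻¹ + y⁻¹ := by
    filter_upwards [isOpen_ne.mem_nhds hx] with z hz using deriv_W_fst hz
  rw [hW.deriv_eq]
  exact ((((hasDerivAt_inv_sq hx).mul_const y⁻¹).const_sub 1).add_const y⁻¹).congr_deriv
    (by ring) |>.deriv

theorem deriv_deriv_W_snd (hy : y ≠ 0) :
    deriv (deriv (fun z => W x z)) y = 2 * (x⁻¹ + 3 + x) * (y ^ 3)⁻¹ := by
  have hW : deriv (fun z => W x z) =ᶠ[nhds y] fun z => 1 - (x⁻¹ + 3 + x) * (z ^ 2)⁻¹ := by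
    filter_upwards [isOpen_ne.mem_nhds hy] with z hz using deriv_W_snd hz
  rw [hW.deriv_eq]
  exact (((hasDerivAt_inv_sq hy).const_mul (x⁻¹ + 3 + x)).const_sub 1).congr_deriv
    (by ring) |>.deriv

theorem deriv_deriv_W_fst_snd (hx : x ≠ 0) (hy : y ≠ 0) :
    deriv (fun w => deriv (fun z => W z w) x) y = ((x ^ 2)⁻¹ - 1) * (y ^ 2)⁻¹ := by
  simp_rw [deriv_W_fst hx]
  exact ((((hasDerivAt_inv hy).const_mul (x ^ 2)⁻¹).const_sub 1).add
    (hasDerivAt_inv hy)).congr_deriv (by ring) |>.deriv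

end Derivatives

theorem isCritPt_iff {x y : ℂ} :
    IsCritPt (x, y) ↔
      x ≠ 0 ∧ y ≠ 0 ∧ x ^ 2 * y = 1 - x ^ 2 ∧ x * y ^ 2 = 1 + 3 * x + x ^ 2 := by
  refine and_congr_right fun hx => and_congr_right fun hy => ?_
  simp only [deriv_W_fst hx, deriv_W_snd hy]
  constructor
  · rintro ⟨h₁, h₂⟩
    field_simp at h₁ h₂
    exact ⟨by linear_combination h₁, by linear_combination h₂⟩
  · rintro ⟨h₁, h₂⟩
    constructor <;> field_simp
    · linear_combination h₁
    · linear_combination h₂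

theorem isCritPt_iff_eval_quintic {x y : ℂ} :
    IsCritPt (x, y) ↔ quintic.eval x = 0 ∧ y = (1 - x ^ 2) / x ^ 2 := by
  constructor
  · intro h
    obtain ⟨hx, -, h₁, h₂⟩ := isCritPt_iff.mp h
    refine ⟨?_, eq_div_of_mul_eq (pow_ne_zero 2 hx) (by linear_combination h₁)⟩
    have hxQ : x * quintic.eval x = 0 := by
      rw [eval_quintic]
      linear_combination x * (x ^ 2 * y + 1 - x ^ 2) * h₁ - x ^ 4 * h₂
    exact (mul_eq_zero.mp hxQ).resolve_left hx
  · rintro ⟨hQ, rfl⟩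
    have hx := ne_zero_of_eval_quintic_eq_zero hQ
    refine isCritPt_iff.mpr ⟨hx, div_ne_zero (one_sub_sq_ne_zero_of_eval_quintic_eq_zero hQ)
      (pow_ne_zero 2 hx), by field_simp, ?_⟩
    rw [eval_quintic] at hQ
    field_simp
    linear_combination -hQ

theorem hessDet_of_isCritPt {x y : ℂ} (h : IsCritPt (x, y)) :
    hessDet (x, y) = (4 - x ^ 3) / (x ^ 3 * y ^ 2) := by
  obtain ⟨hx, hy, h₁, h₂⟩ := isCritPt_iff.mp h
  rw [hessDet, deriv_deriv_W_fst hx, deriv_deriv_W_snd hy, deriv_deriv_W_fst_snd hx hy]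
  field_simp
  linear_combination (-4) * h₂ + (x ^ 2 * y + 1 - x ^ 2) * h₁

/-- `W` has exactly 5 critical points in `(ℂ∖{0})²`, and each of them is
nondegenerate (nonvanishing Hessian determinant). -/
theorem W_critical_points :
    {p : ℂ × ℂ | IsCritPt p}.ncard = 5 ∧
      ∀ p : ℂ × ℂ, IsCritPt p → hessDet p ≠ 0 := by
  have hcrit : {p : ℂ × ℂ | IsCritPt p} =
      (fun x => (x, (1 - x ^ 2) / x ^ 2)) '' {x | quintic.eval x = 0} := by
    ext ⟨x, y⟩
    simp [isCritPt_iff_eval_quintic, eq_comm]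
  refine ⟨?_, ?_⟩
  · rw [hcrit, Set.ncard_image_of_injective _ fun a b h => (Prod.ext_iff.mp h).1,
      ncard_setOf_eval_eq_zero separable_quintic, natDegree_quintic]
  · rintro ⟨x, y⟩ h
    obtain ⟨hQ, -⟩ := isCritPt_iff_eval_quintic.mp h
    rw [hessDet_of_isCritPt h]
    exact div_ne_zero (four_sub_cube_ne_zero_of_eval_quintic_eq_zero hQ)
      (mul_ne_zero (pow_ne_zero 3 h.1) (pow_ne_zero 2 h.2.1))
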